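/- Let Γ, Q¹ ∈ ℚ[[x₁,x₂,y₁,y₂]] and define G ∈ ℚ[[s,u,v,w]] by G := Γ(s,u+v,v,w). Assume: (i) Q¹_{x₁x₁} = Γ_{x₂y₁} − 2Γ_{y₂x₁} + Γ_{x₁}·Γ_{x₂x₁x₁} + (Γ_{y₁x₁} + Γ_{x₂})·(Γ_{x₁x₁x₁} + 2y₁Γ_{x₂x₁x₁}) + Γ_{y₁x₂}·(2y₁Γ_{x₁x₁x₁} + (2y₁²+2y₂)Γ_{x₂x₁x₁}) (the specialisation to X = P², k = 1, i = j = 1 of Proposition 2.3), and (ii) G_{wss} = G_{uu} + G_{us}·(L G_{ss}) + G_{uu}·(P G_{ss}) (equation (11) of the paper). Then after the substitution (x₁,x₂,y₁,y₂) = (s,u+v,v,w): Q¹_{x₁x₁} = G_{vu} − 2G_{ws} − G_{wss} + G_s·G_{uss} + G_u·(L G_{ss}) + G_{vs}·(L G_{ss}) + G_{vu}·(P G_{ss}). (This is the paper's Equation (Q1forP2).) -/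

import Mathlib

/-!
`G = Γ(s, u+v, v, w)` is the image of `Γ` under the substitution map `T`, which satisfies the
chain rule `∂_s ∘ T = T ∘ ∂_{x₁}`, `∂_u ∘ T = T ∘ ∂_{x₂}`, `∂_v ∘ T = T ∘ (∂_{x₂} + ∂_{y₁})`,
`∂_w ∘ T = T ∘ ∂_{y₂}` and fixes `y₁ = v`, `y₂ = w`. On coefficients these rules are
absorption identities for binomial coefficients, and they already force `T` to be
multiplicative: the defect `T(FG) - T F · T G` has no constant term and its derivatives are
again such defects.
Applying the ring homomorphism `T` to (i) and rewriting every derivative of `G` through the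
chain rule, the claimed identity differs from the image of (i) by
`G_{uu} - G_{wss} + G_{us}(L G_{ss}) + G_{uu}(P G_{ss})`, which vanishes by (ii).
-/

/-- Formal partial derivative of a multivariate power series with respect to the `i`-th
variable: the coefficient at a monomial `m` is `(m i + 1)` times the coefficient at
`m + eᵢ`. -/
noncomputable def pd {n : ℕ} (i : Fin n) (F : MvPowerSeries (Fin n) ℚ) :
    MvPowerSeries (Fin n) ℚ :=
  fun m => ((m i : ℚ) + 1) * MvPowerSeries.coeff (R := ℚ) (m + Finsupp.single i 1) F

/-- Substitution `(x₁,x₂,y₁,y₂) = (s, u+v, v, w)` turning a power series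
`Γ ∈ ℚ[[x₁,x₂,y₁,y₂]]` into `Γ(s, u+v, v, w) ∈ ℚ[[s,u,v,w]]` (variables of the source are
indexed `x₁,x₂,y₁,y₂ = 0,1,2,3` and of the target `s,u,v,w = 0,1,2,3`):  the coefficient at
`s^a u^b v^c w^d` is `∑_{k=0}^{c} binom(b+k, b) · (coeff of Γ at x₁^a x₂^{b+k} y₁^{c-k}
y₂^d)`, coming from the expansion of `(u+v)^{b+k}`. -/
noncomputable def substP2 (Γ : MvPowerSeries (Fin 4) ℚ) : MvPowerSeries (Fin 4) ℚ :=
  fun m => ∑ k ∈ Finset.range (m 2 + 1),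
    (Nat.choose (m 1 + k) (m 1) : ℚ) *
      MvPowerSeries.coeff (R := ℚ)
        (Finsupp.single 0 (m 0) + Finsupp.single 1 (m 1 + k) +
         Finsupp.single 2 (m 2 - k) + Finsupp.single 3 (m 3)) Γ

/-- The operator `L = ∂/∂s + 2v ∂/∂u` on `ℚ[[s,u,v,w]]` (variables `s,u,v,w = 0,1,2,3`). -/
noncomputable def Lop (F : MvPowerSeries (Fin 4) ℚ) : MvPowerSeries (Fin 4) ℚ :=
  pd 0 F + 2 * MvPowerSeries.X 2 * pd 1 F

/-- The operator `P = 2v ∂/∂s + (2v²+2w) ∂/∂u` on `ℚ[[s,u,v,w]]`. -/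
noncomputable def Pop (F : MvPowerSeries (Fin 4) ℚ) : MvPowerSeries (Fin 4) ℚ :=
  2 * MvPowerSeries.X 2 * pd 0 F +
    (2 * MvPowerSeries.X 2 ^ 2 + 2 * MvPowerSeries.X 3) * pd 1 F

open MvPowerSeries Finsupp

namespace MvPowerSeries

theorem pderiv_comm {σ R : Type*} [CommSemiring R] (i j : σ) (f : MvPowerSeries σ R) :
    pderiv R i (pderiv R j f) = pderiv R j (pderiv R i f) := by
  rcases eq_or_ne i j with rfl | hij
  · rfl
  ext n
  simp only [coeff_pderiv, Finsupp.add_apply, single_eq_of_ne hij, single_eq_of_ne hij.symm,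
    add_zero, add_right_comm n (single i 1)]
  ring

variable {σ τ R : Type*} [CommRing R] [IsAddTorsionFree R]

theorem coeff_eq_zero_of_coeff_pderiv_eq_zero {f : MvPowerSeries τ R} {n : τ →₀ ℕ} {j : τ}
    (hj : n j ≠ 0) (h : coeff (n - single j 1) (pderiv R j f) = 0) : coeff n f = 0 := by
  rwa [coeff_pderiv, tsub_add_cancel_of_le (single_le_iff.mpr (Nat.one_le_iff_ne_zero.mpr hj)),
    coe_tsub, Pi.sub_apply, single_eq_same, Nat.cast_sub (Nat.one_le_iff_ne_zero.mpr hj),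
    Nat.cast_one, sub_add_cancel, mul_comm, ← nsmul_eq_mul, smul_eq_zero_iff_right hj] at h

section Intertwining

variable (T : MvPowerSeries σ R →ₗ[R] MvPowerSeries τ R)
  (D : τ → Derivation R (MvPowerSeries σ R) (MvPowerSeries σ R))
  (hD : ∀ j f, pderiv R j (T f) = T (D j f))
  (hc : ∀ f, constantCoeff (T f) = constantCoeff f)
include hD hc

theorem map_mul_of_pderiv_map (f g : MvPowerSeries σ R) : T (f * g) = T f * T g := by
  rw [← sub_eq_zero]
  ext n
  rw [map_zero]
  induction n using WellFoundedLT.induction generalizing f g with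
  | ind n ih =>
  by_cases hn : n = 0
  · simp [hn, hc]
  obtain ⟨j, hj : n j ≠ 0⟩ := ne_iff.mp hn
  refine coeff_eq_zero_of_coeff_pderiv_eq_zero hj ?_
  have hlt : n - single j 1 < n := Finsupp.lt_def.mpr ⟨tsub_le_self, j, by simp; omega⟩
  have hderiv : pderiv R j (T (f * g) - T f * T g) =
      (T (f * D j g) - T f * T (D j g)) + (T (g * D j f) - T g * T (D j f)) := by
    simp only [map_sub, Derivation.leibniz, hD, smul_eq_mul, map_add]
    ring
  rw [hderiv, map_add, ih _ hlt, ih _ hlt, add_zero]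

theorem map_one_of_pderiv_map : T 1 = 1 :=
  pderiv.ext (fun j => by rw [hD, Derivation.map_one_eq_zero, map_zero, pderiv_one])
    (by rw [hc, map_one, map_one])

end Intertwining

end MvPowerSeries

theorem pd_eq_pderiv {n : ℕ} (i : Fin n) (F : MvPowerSeries (Fin n) ℚ) :
    pd i F = pderiv ℚ i F := by
  ext m
  exact mul_comm _ _

noncomputable def expVec (a b c d : ℕ) : Fin 4 →₀ ℕ :=
  single 0 a + single 1 b + single 2 c + single 3 d

@[simp] theorem expVec_apply_zero (a b c d : ℕ) : expVec a b c d 0 = a := by simp [expVec]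
@[simp] theorem expVec_apply_one (a b c d : ℕ) : expVec a b c d 1 = b := by simp [expVec]
@[simp] theorem expVec_apply_two (a b c d : ℕ) : expVec a b c d 2 = c := by simp [expVec]
@[simp] theorem expVec_apply_three (a b c d : ℕ) : expVec a b c d 3 = d := by simp [expVec]

theorem eq_expVec_iff {m : Fin 4 →₀ ℕ} {a b c d : ℕ} :
    m = expVec a b c d ↔ m 0 = a ∧ m 1 = b ∧ m 2 = c ∧ m 3 = d := by
  constructor
  · rintro rfl; simp
  · rintro ⟨rfl, rfl, rfl, rfl⟩
    ext i; fin_cases i <;> simp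

theorem coeff_substP2 (F : MvPowerSeries (Fin 4) ℚ) (m : Fin 4 →₀ ℕ) :
    coeff m (substP2 F) = ∑ k ∈ Finset.range (m 2 + 1),
      ((m 1 + k).choose (m 1) : ℚ) * coeff (expVec (m 0) (m 1 + k) (m 2 - k) (m 3)) F := rfl

theorem substP2_add (F G : MvPowerSeries (Fin 4) ℚ) :
    substP2 (F + G) = substP2 F + substP2 G := by
  ext m
  simp [coeff_substP2, mul_add, Finset.sum_add_distrib]

theorem substP2_smul (c : ℚ) (F : MvPowerSeries (Fin 4) ℚ) :
    substP2 (c • F) = c • substP2 F := by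
  ext m
  simp [coeff_substP2, Finset.mul_sum, mul_left_comm]

theorem constantCoeff_substP2 (F : MvPowerSeries (Fin 4) ℚ) :
    constantCoeff (substP2 F) = constantCoeff F := by
  rw [← coeff_zero_eq_constantCoeff_apply, ← coeff_zero_eq_constantCoeff_apply, coeff_substP2]
  simp [expVec]

theorem cast_choose_succ_add_mul (b k : ℕ) :
    ((b + 1 + k).choose (b + 1) : ℚ) * (b + 1) = (b + k).choose b * (b + k + 1) := by
  have h : ((b + k + 1 : ℕ) : ℚ) * ((b + k).choose b : ℕ) =
      ((b + k + 1).choose (b + 1) : ℕ) * ((b + 1 : ℕ) : ℚ) := by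
    exact_mod_cast Nat.add_one_mul_choose_eq (b + k) b
  rw [add_right_comm b k 1] at h
  push_cast at h
  linarith

theorem cast_choose_add_mul_succ (b k : ℕ) :
    ((b + k).choose b : ℚ) * (b + k + 1) = (b + k + 1).choose b * (k + 1) := by
  have h := Nat.choose_mul_succ_eq (b + k) b
  rw [show b + k + 1 - b = k + 1 by omega] at h
  exact_mod_cast h

theorem pderiv_zero_substP2 (F : MvPowerSeries (Fin 4) ℚ) :
    pderiv ℚ 0 (substP2 F) = substP2 (pderiv ℚ 0 F) := by
  ext m
  simp only [coeff_pderiv, coeff_substP2, Finset.sum_mul]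
  refine Finset.sum_congr (by simp) fun k _ => ?_
  have hshift : expVec (m 0) (m 1 + k) (m 2 - k) (m 3) + single 0 1 =
      expVec (m 0 + 1) (m 1 + k) (m 2 - k) (m 3) := by
    simp [eq_expVec_iff]
  simp [hshift, mul_assoc]

theorem pderiv_three_substP2 (F : MvPowerSeries (Fin 4) ℚ) :
    pderiv ℚ 3 (substP2 F) = substP2 (pderiv ℚ 3 F) := by
  ext m
  simp only [coeff_pderiv, coeff_substP2, Finset.sum_mul]
  refine Finset.sum_congr (by simp) fun k _ => ?_
  have hshift : expVec (m 0) (m 1 + k) (m 2 - k) (m 3) + single 3 1 =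
      expVec (m 0) (m 1 + k) (m 2 - k) (m 3 + 1) := by
    simp [eq_expVec_iff]
  simp [hshift, mul_assoc]

theorem pderiv_one_substP2 (F : MvPowerSeries (Fin 4) ℚ) :
    pderiv ℚ 1 (substP2 F) = substP2 (pderiv ℚ 1 F) := by
  ext m
  simp only [coeff_pderiv, coeff_substP2, Finset.sum_mul]
  refine Finset.sum_congr (by simp) fun k _ => ?_
  have hshift : expVec (m 0) (m 1 + k) (m 2 - k) (m 3) + single 1 1 =
      expVec (m 0) (m 1 + 1 + k) (m 2 - k) (m 3) := by
    simp [eq_expVec_iff]; ring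
  simp [hshift]
  linear_combination
    coeff (expVec (m 0) (m 1 + 1 + k) (m 2 - k) (m 3)) F * cast_choose_succ_add_mul (m 1) k

theorem sum_range_add_one_mul_add_sub_mul (g : ℕ → ℚ) (c : ℕ) :
    ∑ k ∈ Finset.range (c + 1), (((k : ℚ) + 1) * g (k + 1) + ((c : ℚ) + 1 - k) * g k) =
      ∑ k ∈ Finset.range (c + 2), ((c : ℚ) + 1) * g k := by
  have hshift : ∑ k ∈ Finset.range (c + 1), ((k : ℚ) + 1) * g (k + 1) =
      ∑ k ∈ Finset.range (c + 2), (k : ℚ) * g k := by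
    simp [Finset.sum_range_succ' (fun k => (k : ℚ) * g k)]
  have hextend : ∑ k ∈ Finset.range (c + 1), ((c : ℚ) + 1 - k) * g k =
      ∑ k ∈ Finset.range (c + 2), ((c : ℚ) + 1 - k) * g k := by
    simp [Finset.sum_range_succ _ (c + 1)]
  rw [Finset.sum_add_distrib, hshift, hextend, ← Finset.sum_add_distrib]
  exact Finset.sum_congr rfl fun k _ => by ring

theorem pderiv_two_substP2 (F : MvPowerSeries (Fin 4) ℚ) :
    pderiv ℚ 2 (substP2 F) = substP2 (pderiv ℚ 1 F + pderiv ℚ 2 F) := by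
  ext m
  let g : ℕ → ℚ := fun k =>
    ((m 1 + k).choose (m 1) : ℚ) * coeff (expVec (m 0) (m 1 + k) (m 2 + 1 - k) (m 3)) F
  have hlhs : coeff m (pderiv ℚ 2 (substP2 F)) = ∑ k ∈ Finset.range (m 2 + 2), (m 2 + 1) * g k := by
    simp [coeff_pderiv, coeff_substP2, Finset.mul_sum, g, mul_comm]
  have hx (k : ℕ) : ((m 1 + k).choose (m 1) : ℚ) *
      coeff (expVec (m 0) (m 1 + k) (m 2 - k) (m 3)) (pderiv ℚ 1 F) = (k + 1) * g (k + 1) := by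
    have hshift : expVec (m 0) (m 1 + k) (m 2 - k) (m 3) + single 1 1 =
        expVec (m 0) (m 1 + k + 1) (m 2 - k) (m 3) := by
      simp [eq_expVec_iff]
    simp only [coeff_pderiv, hshift, g, expVec_apply_one, Nat.add_sub_add_right, ← add_assoc]
    push_cast
    linear_combination
      coeff (expVec (m 0) (m 1 + k + 1) (m 2 - k) (m 3)) F * cast_choose_add_mul_succ (m 1) k
  have hy (k : ℕ) (hk : k ≤ m 2) : ((m 1 + k).choose (m 1) : ℚ) *
      coeff (expVec (m 0) (m 1 + k) (m 2 - k) (m 3)) (pderiv ℚ 2 F) = (m 2 + 1 - k) * g k := by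
    have hshift : expVec (m 0) (m 1 + k) (m 2 - k) (m 3) + single 2 1 =
        expVec (m 0) (m 1 + k) (m 2 + 1 - k) (m 3) := by
      simp [eq_expVec_iff]; omega
    simp only [coeff_pderiv, hshift, g, expVec_apply_two, Nat.cast_sub hk]
    ring
  rw [hlhs, coeff_substP2, ← sum_range_add_one_mul_add_sub_mul]
  refine Finset.sum_congr rfl fun k hk => ?_
  rw [map_add, mul_add, hx, hy k (Nat.lt_succ_iff.mp (Finset.mem_range.mp hk))]

noncomputable def substP2Deriv :
    Fin 4 → Derivation ℚ (MvPowerSeries (Fin 4) ℚ) (MvPowerSeries (Fin 4) ℚ) :=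
  ![pderiv ℚ 0, pderiv ℚ 1, pderiv ℚ 1 + pderiv ℚ 2, pderiv ℚ 3]

theorem pderiv_substP2 (j : Fin 4) (F : MvPowerSeries (Fin 4) ℚ) :
    pderiv ℚ j (substP2 F) = substP2 (substP2Deriv j F) := by
  fin_cases j
  · exact pderiv_zero_substP2 F
  · exact pderiv_one_substP2 F
  · exact pderiv_two_substP2 F
  · exact pderiv_three_substP2 F

noncomputable def substP2LinearMap : MvPowerSeries (Fin 4) ℚ →ₗ[ℚ] MvPowerSeries (Fin 4) ℚ where
  toFun := substP2
  map_add' := substP2_add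
  map_smul' := substP2_smul

noncomputable def substP2AlgHom : MvPowerSeries (Fin 4) ℚ →ₐ[ℚ] MvPowerSeries (Fin 4) ℚ :=
  AlgHom.ofLinearMap substP2LinearMap
    (map_one_of_pderiv_map _ substP2Deriv pderiv_substP2 constantCoeff_substP2)
    (map_mul_of_pderiv_map _ substP2Deriv pderiv_substP2 constantCoeff_substP2)

theorem coe_substP2AlgHom : ⇑substP2AlgHom = substP2 := rfl

theorem substP2_X_of_ne_one {i : Fin 4} (hi : i ≠ 1) : substP2 (X i) = X i := by
  refine pderiv.ext (fun j => ?_) (by rw [constantCoeff_substP2])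
  rw [pderiv_substP2, ← coe_substP2AlgHom]
  fin_cases i <;> fin_cases j <;> simp_all [substP2Deriv]

/-- Let `Γ, Q¹ ∈ ℚ[[x₁,x₂,y₁,y₂]]`, `G = Γ(s,u+v,v,w)`.  Assume
(i) `Q¹_{x₁x₁} = Γ_{x₂y₁} − 2Γ_{y₂x₁} + Γ_{x₁}Γ_{x₂x₁x₁}
  + (Γ_{y₁x₁} + Γ_{x₂})(Γ_{x₁x₁x₁} + 2y₁Γ_{x₂x₁x₁})
  + Γ_{y₁x₂}(2y₁Γ_{x₁x₁x₁} + (2y₁²+2y₂)Γ_{x₂x₁x₁})`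
(the specialisation to `X = ℙ²`, `k = 1`, `i = j = 1` of Proposition 2.3), and
(ii) `G_{wss} = G_{uu} + G_{us}(L G_{ss}) + G_{uu}(P G_{ss})` (equation (11) of the paper).
Then, after substitution,
`Q¹_{x₁x₁} = G_{vu} − 2G_{ws} − G_{wss} + G_sG_{uss} + G_u(L G_{ss}) + G_{vs}(L G_{ss})
  + G_{vu}(P G_{ss})`.  This is the paper's Equation (Q1forP2). -/
theorem Q1_potential_P2
    (Γ Q1 : MvPowerSeries (Fin 4) ℚ)
    (G : MvPowerSeries (Fin 4) ℚ) (hG : G = substP2 Γ)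
    (h1 : pd 0 (pd 0 Q1) =
      pd 2 (pd 1 Γ) - 2 * pd 0 (pd 3 Γ) + pd 0 Γ * pd 0 (pd 0 (pd 1 Γ))
        + (pd 0 (pd 2 Γ) + pd 1 Γ) *
            (pd 0 (pd 0 (pd 0 Γ)) + 2 * MvPowerSeries.X 2 * pd 0 (pd 0 (pd 1 Γ)))
        + pd 1 (pd 2 Γ) *
            (2 * MvPowerSeries.X 2 * pd 0 (pd 0 (pd 0 Γ)) +
              (2 * MvPowerSeries.X 2 ^ 2 + 2 * MvPowerSeries.X 3) * pd 0 (pd 0 (pd 1 Γ))))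
    (h2 : pd 3 (pd 0 (pd 0 G)) =
      pd 1 (pd 1 G) + pd 1 (pd 0 G) * Lop (pd 0 (pd 0 G))
        + pd 1 (pd 1 G) * Pop (pd 0 (pd 0 G))) :
    substP2 (pd 0 (pd 0 Q1)) =
      pd 2 (pd 1 G) - 2 * pd 3 (pd 0 G) - pd 3 (pd 0 (pd 0 G))
        + pd 0 G * pd 1 (pd 0 (pd 0 G)) + pd 1 G * Lop (pd 0 (pd 0 G))
        + pd 2 (pd 0 G) * Lop (pd 0 (pd 0 G)) + pd 2 (pd 1 G) * Pop (pd 0 (pd 0 G)) := by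
  subst hG
  simp only [Lop, Pop, pd_eq_pderiv] at h1 h2 ⊢
  rw [h1]
  simp only [pderiv_zero_substP2, pderiv_one_substP2, pderiv_two_substP2, pderiv_three_substP2]
    at h2 ⊢
  simp only [← coe_substP2AlgHom, map_add, map_sub, map_mul, map_pow, map_ofNat] at h2 ⊢
  simp only [coe_substP2AlgHom, substP2_X_of_ne_one (show (2 : Fin 4) ≠ 1 by decide),
    substP2_X_of_ne_one (show (3 : Fin 4) ≠ 1 by decide), pderiv_comm] at h2 ⊢
  linear_combination h2
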